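/- arXiv:2305.14125 — 9 statements merged into one kernel-verified Lean document; each statement's English description precedes it below -/
import Mathlib

section
/- Let u : ℝ → ℝ be twice differentiable, strictly increasing and strictly concave, with first-order conditions u'(x₂) = p₂·β·δ·u'(x₃) and u'(f(x₂))·f'(x₂) + βδ·u'(x₂) + βδ²·u'(g(x₂))·g'(x₂) = 0, where g(x₂) = (u')⁻¹((βδp₂)⁻¹ u'(x₂)) and f(x₂) = (m − p₂x₂ − g(x₂))/p₁. If x₁ = x₂ = x₃ with x₁ = x₂ = x₃ > 0, p₂ = 3, p₁ = 4, β·δ·p₂ = 1, then necessarily δ = 2; in particular no such rationalization with δ ≤ 1 exists. -/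
theorem no_sophisticated_rationalization_delta_eq_two
    (u u' f g f' g' : ℝ → ℝ) (x₁ x₂ x₃ m p₁ p₂ β δ : ℝ)
    (hderiv : ∀ x, HasDerivAt u (u' x) x)
    (hC2 : ∀ x, DifferentiableAt ℝ u' x)
    (hmono : StrictMono u)
    (hconc : StrictConcaveOn ℝ Set.univ u)
    (hg : ∀ y, u' (g y) = (β * δ * p₂)⁻¹ * u' y)
    (hf : ∀ y, f y = (m - p₂ * y - g y) / p₁)
    (hg' : ∀ y, HasDerivAt g (g' y) y)
    (hf' : ∀ y, HasDerivAt f (f' y) y)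
    (hfoc2 : u' x₂ = p₂ * (β * δ) * u' x₃)
    (hfoc1 : u' (f x₂) * f' x₂ + β * δ * u' x₂ + β * δ ^ 2 * u' (g x₂) * g' x₂ = 0)
    (hx12 : x₁ = x₂) (hx23 : x₂ = x₃) (hxpos : 0 < x₁) (hfx : f x₂ = x₁)
    (hp2 : p₂ = 3) (hp1 : p₁ = 4)
    (hβδ : β * δ * p₂ = 1) (hβ : 0 < β) (hδ : 0 < δ) :
    δ = 2 ∧ ¬ δ ≤ 1 := by
  have hudiff : ∀ x, DifferentiableAt ℝ u x := fun x => (hderiv x).differentiableAt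
  have hud : ∀ x, deriv u x = u' x := fun x => (hderiv x).deriv
  -- u' is strictly antitone
  have hanti : StrictAnti u' := by
    have h := hconc.strictAntiOn_deriv (fun x _ => hudiff x)
    intro a b hab
    have := h (Set.mem_univ a) (Set.mem_univ b) hab
    rwa [hud, hud] at this
  -- u' x₂ ≠ 0
  have hune : u' x₂ ≠ 0 := by
    intro h0
    have hneg : ∀ y ∈ Set.Ioi x₂, deriv u y < 0 := by
      intro y hy
      rw [hud]
      have := hanti hy
      rwa [h0] at this
    have hda : StrictAntiOn u (Set.Ioi x₂) :=
      strictAntiOn_of_deriv_neg (convex_Ioi x₂) (Differentiable.continuous hudiff).continuousOn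
        (by rwa [interior_Ioi])
    have h1 : u (x₂ + 2) < u (x₂ + 1) :=
      hda (by simp : x₂ + 1 ∈ Set.Ioi x₂) (by norm_num : x₂ + 2 ∈ Set.Ioi x₂) (by norm_num)
    have h2 : u (x₂ + 1) < u (x₂ + 2) := hmono (by norm_num)
    linarith
  -- g is the identity
  have hβδ1 : (β * δ * p₂)⁻¹ = 1 := by rw [hβδ]; norm_num
  have hgid : ∀ y, g y = y := by
    intro y
    have := hg y
    rw [hβδ1, one_mul] at this
    exact hanti.injective this
  have hgfun : g = id := funext fun y => hgid y
  have hg1 : g' x₂ = 1 := by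
    have h1 : HasDerivAt g 1 x₂ := by rw [hgfun]; exact hasDerivAt_id x₂
    exact (hg' x₂).unique h1
  -- f y = (m - 4 y)/4, so f' = -1
  have hffun : f = fun y => (m - 4 * y) / 4 := by
    funext y
    rw [hf y, hgid y, hp1, hp2]; ring
  have hf1 : f' x₂ = -1 := by
    have h1 : HasDerivAt (fun y => (m - 4 * y) / 4) (-1) x₂ := by
      have : HasDerivAt (fun y : ℝ => (m - 4 * y) / 4) ((0 - 4 * 1) / 4) x₂ :=
        (((hasDerivAt_const x₂ m).sub ((hasDerivAt_id x₂).const_mul 4))).div_const 4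
      simpa using this
    exact (hf' x₂).unique (hffun ▸ h1)
  -- β * δ = 1/3
  have hbd : β * δ = 1 / 3 := by rw [hp2] at hβδ; linarith
  -- plug into FOC1
  have hfx2 : f x₂ = x₂ := by rw [hfx, hx12]
  rw [hfx2, hgid x₂, hf1, hg1] at hfoc1
  have hbd2 : β * δ ^ 2 = δ / 3 := by
    have : β * δ ^ 2 = (β * δ) * δ := by ring
    rw [this, hbd]; ring
  rw [hbd, hbd2] at hfoc1
  have hδ2 : δ = 2 := by
    have h : u' x₂ * (δ / 3 - 2 / 3) = 0 := by linarith
    rcases mul_eq_zero.1 h with h | h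
    · exact absurd h hune
    · linarith
  exact ⟨hδ2, by rw [hδ2]; norm_num⟩
end

section
/- The dataset with x₁ = x₂ = x₃ > 0, p₁ = 4, p₂ = 3, p₃ = 1 is FOCs-rationalizable by the sophisticated quasi-hyperbolic model: there exist a monotone increasing, C², strictly concave u : ℝ₊ → ℝ, λ > 0, β ∈ (0,1), δ ∈ (0,1], μ₁, μ₂ ∈ (0,1), μ₃ = 1 such that u'(x_t) = λ (p_t/δ^t) ∏_{i=1}^t 1/(1−(1−β)μ_i) for t = 1,2,3. -/
/-!
The data have constant consumption, so one marginal utility must match all three Euler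
right-hand sides. With `β = 1/3` the factors `1 / (1 - (1 - β) μ)` are `3/2`, `4/3` and `3`
for `μ = 1/2, 3/8, 1`, so with `δ = 1` the price-weighted products are
`4 · 3/2 = 3 · 2 = 1 · 6 = 6`. Any smooth, strictly increasing, strictly concave utility then
works with `λ = u'(x) / 6`; we take `u y = -exp (-y)`.
-/

open Real Set

theorem hasDerivAt_neg_exp_neg (y : ℝ) : HasDerivAt (fun y => -exp (-y)) (exp (-y)) y :=
  ((hasDerivAt_exp (-y)).comp y (hasDerivAt_neg y)).neg.congr_deriv (by ring)

theorem deriv_neg_exp_neg : deriv (fun y : ℝ => -exp (-y)) = fun y => exp (-y) :=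
  funext fun y => (hasDerivAt_neg_exp_neg y).deriv

theorem contDiff_neg_exp_neg {n : WithTop ℕ∞} : ContDiff ℝ n fun y : ℝ => -exp (-y) :=
  (contDiff_exp.comp contDiff_neg).neg

theorem strictMono_neg_exp_neg : StrictMono fun y : ℝ => -exp (-y) :=
  strictMono_of_deriv_pos fun y => by rw [deriv_neg_exp_neg]; exact exp_pos _

theorem strictConcaveOn_neg_exp_neg : StrictConcaveOn ℝ univ fun y : ℝ => -exp (-y) :=
  StrictAnti.strictConcaveOn_univ_of_deriv (contDiff_neg_exp_neg (n := 0)).continuous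
    (by rw [deriv_neg_exp_neg]; exact fun a b hab => exp_lt_exp.2 (neg_lt_neg hab))

theorem focs_rationalizable_constant_data_general (x : ℝ) :
    ∃ (u : ℝ → ℝ) (lam β δ μ₁ μ₂ μ₃ : ℝ),
      StrictMonoOn u (Set.Ici 0) ∧
      ContDiff ℝ 2 u ∧
      StrictConcaveOn ℝ (Set.Ici 0) u ∧
      0 < lam ∧ β ∈ Set.Ioo (0:ℝ) 1 ∧ δ ∈ Set.Ioc (0:ℝ) 1 ∧
      μ₁ ∈ Set.Ioo (0:ℝ) 1 ∧ μ₂ ∈ Set.Ioo (0:ℝ) 1 ∧ μ₃ = 1 ∧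
      deriv u x = lam * (4 / δ ^ 1) * (1 / (1 - (1 - β) * μ₁)) ∧
      deriv u x = lam * (3 / δ ^ 2) *
        ((1 / (1 - (1 - β) * μ₁)) * (1 / (1 - (1 - β) * μ₂))) ∧
      deriv u x = lam * (1 / δ ^ 3) *
        ((1 / (1 - (1 - β) * μ₁)) * (1 / (1 - (1 - β) * μ₂)) *
          (1 / (1 - (1 - β) * μ₃))) := by
  refine ⟨fun y => -exp (-y), exp (-x) / 6, 1 / 3, 1, 1 / 2, 3 / 8, 1,
    strictMono_neg_exp_neg.strictMonoOn _, contDiff_neg_exp_neg,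
    strictConcaveOn_neg_exp_neg.subset (subset_univ _) (convex_Ici 0),
    by positivity, by norm_num, by norm_num, by norm_num, by norm_num, rfl, ?_, ?_, ?_⟩ <;>
  · rw [deriv_neg_exp_neg]; ring

theorem focs_rationalizable_constant_data (x : ℝ) (hx : 0 < x) :
    ∃ (u : ℝ → ℝ) (lam β δ μ₁ μ₂ μ₃ : ℝ),
      StrictMonoOn u (Set.Ici 0) ∧
      ContDiff ℝ 2 u ∧
      StrictConcaveOn ℝ (Set.Ici 0) u ∧
      0 < lam ∧ β ∈ Set.Ioo (0:ℝ) 1 ∧ δ ∈ Set.Ioc (0:ℝ) 1 ∧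
      μ₁ ∈ Set.Ioo (0:ℝ) 1 ∧ μ₂ ∈ Set.Ioo (0:ℝ) 1 ∧ μ₃ = 1 ∧
      deriv u x = lam * (4 / δ ^ 1) * (1 / (1 - (1 - β) * μ₁)) ∧
      deriv u x = lam * (3 / δ ^ 2) *
        ((1 / (1 - (1 - β) * μ₁)) * (1 / (1 - (1 - β) * μ₂))) ∧
      deriv u x = lam * (1 / δ ^ 3) *
        ((1 / (1 - (1 - β) * μ₁)) * (1 / (1 - (1 - β) * μ₂)) *
          (1 / (1 - (1 - β) * μ₃))) :=
  focs_rationalizable_constant_data_general x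
end

section
/- If a finite dataset D = {(x^k, B^k)}_{k∈K} is naively rationalizable, then it satisfies N-SARP: there is no sequence k₁,…,k_L in K with x^{k_l} ≠ x^{k_{l+1}} and x^{k_l} ∈ B^{k_{l+1}}(x_1^{k_{l+1}}) for each l (indices mod L). -/
def maxSet {X : Type} (S : Set X) (pref : X → X → Prop) : Set X :=
  {x | x ∈ S ∧ ∀ y ∈ S, pref x y}

def WeakOrder {X : Type} (pref : X → X → Prop) : Prop :=
  (∀ a b, pref a b ∨ pref b a) ∧ Transitive pref

def sec1 {X₁ X₂ : Type} (B : Set (X₁ × X₂)) (a : X₁) : Set (X₁ × X₂) :=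
  {y ∈ B | y.1 = a}

def sec2 {X₁ X₂ : Type} (B : Set (X₁ × X₂)) (b : X₂) : Set (X₁ × X₂) :=
  {y ∈ B | y.2 = b}

def NSARP {K X₁ X₂ : Type} (x : K → X₁ × X₂) (B : K → Set (X₁ × X₂)) : Prop :=
  ¬ ∃ (L : ℕ) (k : Fin (L + 1) → K), ∀ l : Fin (L + 1),
      x (k l) ≠ x (k (l + 1)) ∧ x (k l) ∈ sec1 (B (k (l + 1))) (x (k (l + 1))).1

def NNSARP {K X₁ X₂ : Type} (x : K → X₁ × X₂) (B : K → Set (X₁ × X₂)) : Prop :=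
  ¬ ∃ (L : ℕ) (k : Fin (L + 1) → K), ∀ l : Fin (L + 1),
      x (k l) ≠ x (k (l + 1)) ∧ x (k l) ∈ sec2 (B (k (l + 1))) (x (k (l + 1))).2

def Cond1 {K X₁ X₂ : Type} (x : K → X₁ × X₂) (B : K → Set (X₁ × X₂)) : Prop :=
  ∀ S : Set K, S.Nonempty →
    ¬ (⋃ k ∈ S, sec1 (B k) (x k).1) ⊆ ⋃ k ∈ S, (B k \ sec1 (B k) (x k).1)

def Cond2 {K X₁ X₂ : Type} (x : K → X₁ × X₂) (B : K → Set (X₁ × X₂)) : Prop :=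
  ¬ ∃ (L : ℕ) (k : Fin (L + 1) → K), ∀ l : Fin (L + 1),
      x (k l) ≠ x (k (l + 1)) ∧ x (k l) ∈ sec1 (B (k (l + 1))) (x (k l)).1 ∧
      sec1 (B (k (l + 1))) (x (k l)).1 ⊆ sec1 (B (k l)) (x (k l)).1

def NaiveRat {K X₁ X₂ : Type} (x : K → X₁ × X₂) (B : K → Set (X₁ × X₂)) : Prop :=
  ∃ p1 p2 : X₁ × X₂ → X₁ × X₂ → Prop, WeakOrder p1 ∧ WeakOrder p2 ∧
    ∀ k, (∃ z, maxSet (B k) p1 = {z} ∧ z ∈ sec1 (B k) (x k).1) ∧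
      maxSet (sec1 (B k) (x k).1) p2 = {x k}

def NaiveNashRat {K X₁ X₂ : Type} (x : K → X₁ × X₂) (B : K → Set (X₁ × X₂)) : Prop :=
  ∃ p1 p2 : X₁ × X₂ → X₁ × X₂ → Prop, WeakOrder p1 ∧ WeakOrder p2 ∧
    ∀ k, x k ∈ maxSet (sec2 (B k) (x k).2) p1 ∧
      maxSet (sec1 (B k) (x k).1) p2 = {x k}

def StrictNaiveNashRat {K X₁ X₂ : Type} (x : K → X₁ × X₂) (B : K → Set (X₁ × X₂)) : Prop :=
  ∃ p1 p2 : X₁ × X₂ → X₁ × X₂ → Prop, WeakOrder p1 ∧ WeakOrder p2 ∧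
    ∀ k, maxSet (sec2 (B k) (x k).2) p1 = {x k} ∧
      maxSet (sec1 (B k) (x k).1) p2 = {x k}

def SophRat {K X₁ X₂ : Type} (x : K → X₁ × X₂) (B : K → Set (X₁ × X₂)) : Prop :=
  ∃ p1 p2 : X₁ × X₂ → X₁ × X₂ → Prop, WeakOrder p1 ∧ WeakOrder p2 ∧
    ∀ k, maxSet (⋃ a ∈ Prod.fst '' B k, maxSet (sec1 (B k) a) p2) p1 = {x k}


/-!
Along an N-SARP cycle, `x^{k_l}` lies in the section `B^{k_{l+1}}(x₁^{k_{l+1}})`, whose unique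
`≿₂`-maximum is `x^{k_{l+1}} ≠ x^{k_l}`; so every step of the cycle is a strict `≿₂`-improvement,
and a cycle of strict improvements contradicts transitivity of `≿₂`.
-/

open Fin.NatCast

theorem Fin.not_forall_rel_add_one {α : Type*} {r : α → α → Prop} [Std.Irrefl r] [IsTrans α r]
    {n : ℕ} (f : Fin (n + 1) → α) : ¬ ∀ i, r (f i) (f (i + 1)) := by
  intro hf
  have hstep : ∀ m : ℕ, r (f m) (f (m + 1 : ℕ)) := fun m => by simpa using hf m
  have hloop := Nat.rel_of_forall_rel_succ_of_lt r hstep n.succ_pos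
  rw [Nat.cast_zero, Fin.natCast_self] at hloop
  exact irrefl _ hloop

theorem Fin.not_forall_strictly_improving {α : Type*} {p : α → α → Prop} [IsTrans α p]
    {n : ℕ} (f : Fin (n + 1) → α) : ¬ ∀ i, p (f (i + 1)) (f i) ∧ ¬ p (f i) (f (i + 1)) := by
  let improves : α → α → Prop := fun a b => p b a ∧ ¬ p a b
  have : Std.Irrefl improves := ⟨fun _ h => h.2 h.1⟩
  have : IsTrans α improves :=
    ⟨fun _ _ _ hab hbc => ⟨_root_.trans hbc.1 hab.1, fun hac => hbc.2 (_root_.trans hab.1 hac)⟩⟩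
  exact Fin.not_forall_rel_add_one (r := improves) f

theorem strictly_preferred_of_maxSet_eq_singleton {X : Type} {S : Set X} {p : X → X → Prop}
    [IsTrans X p] {a b : X} (hmax : maxSet S p = {a}) (hb : b ∈ S) (hne : b ≠ a) :
    p a b ∧ ¬ p b a := by
  have ha : a ∈ maxSet S p := hmax ▸ rfl
  refine ⟨ha.2 b hb, fun hba => hne ?_⟩
  have hb_max : b ∈ maxSet S p := ⟨hb, fun y hy => _root_.trans hba (ha.2 y hy)⟩
  rwa [hmax] at hb_max

theorem naive_rationalizable_implies_NSARP_general
    {K X₁ X₂ : Type}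
    (x : K → X₁ × X₂) (B : K → Set (X₁ × X₂))
    (h : NaiveRat x B) : NSARP x B := by
  obtain ⟨_, p2, _, ⟨-, htrans⟩, hchoice⟩ := h
  have : IsTrans _ p2 := ⟨fun _ _ _ hab hbc => htrans hab hbc⟩
  rintro ⟨L, k, hcycle⟩
  refine Fin.not_forall_strictly_improving (p := p2) (x ∘ k) fun l => ?_
  obtain ⟨hne, hmem⟩ := hcycle l
  exact strictly_preferred_of_maxSet_eq_singleton (hchoice (k (l + 1))).2 hmem hne

theorem naive_rationalizable_implies_NSARP
    {K X₁ X₂ : Type} [Fintype K]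
    (x : K → X₁ × X₂) (B : K → Set (X₁ × X₂)) (hmem : ∀ k, x k ∈ B k)
    (h : NaiveRat x B) : NSARP x B :=
  naive_rationalizable_implies_NSARP_general x B h
end

section
/- If a finite dataset D = {(x^k, B^k)}_{k∈K} is naively rationalizable, then it satisfies Condition 1: for every nonempty subset S of K, ⋃_{k∈S} B^k(x₁^k) is not a subset of ⋃_{k∈S} (B^k \ B^k(x₁^k)). -/
theorem naive_rationalizable_implies_Cond1
    {K X₁ X₂ : Type} [Fintype K]
    (x : K → X₁ × X₂) (B : K → Set (X₁ × X₂)) (hmem : ∀ k, x k ∈ B k)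
    (h : NaiveRat x B) : Cond1 x B := by
  obtain ⟨p1, p2, hw1, hw2, hk⟩ := h
  choose z hz hzsec using fun k => (hk k).1
  classical
  have refl1 : ∀ u, p1 u u := fun u => (hw1.1 u u).elim id id
  intro S hS hsub
  have hmax : ∀ T : Finset K, T.Nonempty → ∃ m ∈ T, ∀ j ∈ T, p1 (z m) (z j) := by
    intro T hT
    induction T using Finset.induction_on with
    | empty => exact absurd hT (by simp)
    | @insert a T ha ih =>
      rcases T.eq_empty_or_nonempty with rfl | hT'
      · exact ⟨a, by simp, fun j hj => by
          simp only [Finset.mem_insert, Finset.notMem_empty, or_false] at hj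
          subst hj; exact refl1 _⟩
      · obtain ⟨m, hm, hmx⟩ := ih hT'
        rcases hw1.1 (z a) (z m) with h | h
        · exact ⟨a, Finset.mem_insert_self _ _, fun j hj => by
            rcases Finset.mem_insert.1 hj with rfl | hj
            · exact refl1 _
            · exact hw1.2 h (hmx j hj)⟩
        · exact ⟨m, Finset.mem_insert_of_mem hm, fun j hj => by
            rcases Finset.mem_insert.1 hj with rfl | hj
            · exact h
            · exact hmx j hj⟩
  have hSfin : S.Finite := Set.toFinite S
  obtain ⟨m, hm, hmx⟩ := hmax hSfin.toFinset (hSfin.toFinset_nonempty.2 hS)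
  have hmS : m ∈ S := hSfin.mem_toFinset.1 hm
  have hzm : z m ∈ ⋃ k ∈ S, sec1 (B k) (x k).1 :=
    Set.mem_biUnion hmS (hzsec m)
  obtain ⟨j, hjS, hzj⟩ := Set.mem_iUnion₂.1 (hsub hzm)
  have hzjmax : z j ∈ maxSet (B j) p1 := by rw [hz j]; rfl
  have hzmmax : z m ∈ maxSet (B j) p1 := by
    refine ⟨hzj.1, fun y hy => ?_⟩
    exact hw1.2 (hmx j (hSfin.mem_toFinset.2 hjS)) (hzjmax.2 y hy)
  rw [hz j] at hzmmax
  exact hzj.2 (hzmmax ▸ hzsec j)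
end

section
/- A finite dataset D = {(x^k, B^k)}_{k∈K} is naively rationalizable if and only if it satisfies both N-SARP and Condition 1. -/
/-!
Necessity: the `≿₂`-maximal point of a cycle contradicts the uniqueness of the `≿₂`-maximum of the
section containing it, and the `≿₁`-best of the maxima of the `B^k`, `k ∈ S`, lies in a section
`B^k(x₁^k)` but in no `B^j \ B^j(x₁^j)`.

Sufficiency: `≿₂` ranks a point by the number of observed choices strictly revealed preferred to it,
which N-SARP makes a strict ranking along revealed preferences. `≿₁` ranks points in the order in
which Condition 1 can peel them off: it yields a point lying in some `B^k` and, for every budget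
containing it, in its section; put it on top, discard those budgets and repeat.
-/

open Relation

section WeakOrder

variable {α : Type} {p : α → α → Prop}

theorem WeakOrder.refl (hp : WeakOrder p) (a : α) : p a a :=
  (hp.1 a a).elim id id

theorem WeakOrder.exists_max_image {ι : Type*} (hp : WeakOrder p) (f : ι → α) {s : Finset ι}
    (hs : s.Nonempty) : ∃ i ∈ s, ∀ j ∈ s, p (f i) (f j) := by
  induction hs using Finset.Nonempty.cons_induction with
  | singleton a => exact ⟨a, Finset.mem_singleton_self a, by simpa using hp.refl (f a)⟩
  | cons a s _ _ ih =>
    obtain ⟨i, his, hi⟩ := ih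
    rcases hp.1 (f a) (f i) with hai | hia
    · exact ⟨a, Finset.mem_cons_self a s,
        (Finset.forall_mem_cons _ _).2 ⟨hp.refl _, fun j hj => hp.2 hai (hi j hj)⟩⟩
    · exact ⟨i, Finset.mem_cons_of_mem his, (Finset.forall_mem_cons _ _).2 ⟨hia, hi⟩⟩

theorem weakOrder_le_comp {β : Type*} [LinearOrder β] (u : α → β) :
    WeakOrder fun a b => u a ≤ u b :=
  ⟨fun _ _ => le_total _ _, fun _ _ _ => le_trans⟩

theorem WeakOrder.eq_of_maxSet_eq_singleton (hp : WeakOrder p) {S : Set α} {z w : α}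
    (h : maxSet S p = {z}) (hw : w ∈ S) (hwz : p w z) : w = z := by
  have hz : z ∈ maxSet S p := h ▸ rfl
  have hwmax : w ∈ maxSet S p := ⟨hw, fun y hy => hp.2 hwz (hz.2 y hy)⟩
  rwa [h] at hwmax

theorem maxSet_le_comp_eq_singleton {β : Type*} [LinearOrder β] (u : α → β) {S : Set α} {z : α}
    (hz : z ∈ S) (hlt : ∀ w ∈ S, w ≠ z → u z < u w) :
    maxSet S (fun a b => u a ≤ u b) = {z} := by
  ext w
  constructor
  · rintro ⟨hw, hmax⟩
    by_contra hne
    exact (hlt w hw hne).not_ge (hmax z hz)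
  · rintro rfl
    refine ⟨hz, fun v hv => ?_⟩
    rcases eq_or_ne v w with rfl | hne
    · exact le_rfl
    · exact (hlt v hv hne).le

end WeakOrder

section TransGen

variable {α : Type*} {r : α → α → Prop}

theorem Relation.TransGen.exists_fin_chain {a b : α} (h : TransGen r a b) :
    ∃ (L : ℕ) (c : Fin (L + 1) → α), c 0 = a ∧ r (c (Fin.last L)) b ∧
      ∀ l : Fin L, r (c l.castSucc) (c l.succ) := by
  induction h using Relation.TransGen.head_induction_on with
  | @single a hab => exact ⟨0, fun _ => a, rfl, hab, Fin.elim0⟩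
  | @head a c hac _ ih =>
    obtain ⟨L, d, hd0, hlast, hstep⟩ := ih
    refine ⟨L + 1, Fin.cons a d, rfl, ?_, Fin.cases ?_ fun l => ?_⟩
    · simpa only [← Fin.succ_last, Fin.cons_succ] using hlast
    · simpa only [Fin.castSucc_zero, Fin.cons_zero, Fin.succ_zero_eq_one, Fin.cons_one, hd0]
        using hac
    · simpa only [← Fin.succ_castSucc, Fin.cons_succ] using hstep l

theorem Relation.TransGen.exists_fin_cycle {a : α} (h : TransGen r a a) :
    ∃ (L : ℕ) (c : Fin (L + 1) → α), ∀ l, r (c l) (c (l + 1)) := by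
  obtain ⟨L, c, hc0, hlast, hstep⟩ := h.exists_fin_chain
  refine ⟨L, c, Fin.lastCases ?_ fun l => ?_⟩
  · rwa [Fin.last_add_one, hc0]
  · rw [Fin.coeSucc_eq_succ]
    exact hstep l

theorem ncard_transGen_lt {s : Set α} (hs : s.Finite) (hirr : ∀ a, ¬ TransGen r a a) {a b : α}
    (ha : a ∈ s) (hba : r b a) :
    {c ∈ s | TransGen r a c}.ncard < {c ∈ s | TransGen r b c}.ncard :=
  Set.ncard_lt_ncard
    ⟨fun _ hc => ⟨hc.1, hc.2.head hba⟩, fun hsub => hirr a (hsub ⟨ha, .single hba⟩).2⟩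
    (hs.subset fun _ hc => hc.1)

end TransGen

section RevealedPreference

variable {K X₁ X₂ : Type} (x : K → X₁ × X₂) (B : K → Set (X₁ × X₂))

def RevealedWorse (b a : X₁ × X₂) : Prop :=
  ∃ k, x k = a ∧ b ∈ sec1 (B k) a.1 ∧ b ≠ a

variable {x B}

theorem NSARP.not_transGen_revealedWorse (h : NSARP x B) (a : X₁ × X₂) :
    ¬ TransGen (RevealedWorse x B) a a := by
  intro hcyc
  obtain ⟨L, c, hc⟩ := hcyc.exists_fin_cycle
  choose κ hκ hsec hne using hc
  -- `κ l` reveals `c (l + 1)` over `c l`, while NSARP indexes each step by the better point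
  refine h ⟨L, fun l => κ (l - 1), fun l => ?_⟩
  simp only [add_sub_cancel_right, hκ, sub_add_cancel]
  exact ⟨hne l, hsec l⟩

theorem NSARP.exists_rank [Finite K] (h : NSARP x B) :
    ∃ u : X₁ × X₂ → ℕ, ∀ k, ∀ w ∈ sec1 (B k) (x k).1, w ≠ x k → u (x k) < u w :=
  ⟨fun w => {c ∈ Set.range x | TransGen (RevealedWorse x B) w c}.ncard, fun k _ hw hne =>
    ncard_transGen_lt (Set.finite_range x) h.not_transGen_revealedWorse ⟨k, rfl⟩
      ⟨k, rfl, hw, hne⟩⟩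

theorem Cond1.exists_forall_mem_sec1 (h : Cond1 x B) {S : Set K} (hS : S.Nonempty) :
    ∃ y, (∃ k ∈ S, y ∈ B k) ∧ ∀ k ∈ S, y ∈ B k → y ∈ sec1 (B k) (x k).1 := by
  obtain ⟨y, hy, hy'⟩ := Set.not_subset.1 (h S hS)
  obtain ⟨k, hk, hyk⟩ := Set.mem_iUnion₂.1 hy
  exact ⟨y, ⟨k, hk, hyk.1⟩, fun j hj hyj => by_contra fun hn => hy' (Set.mem_biUnion hj ⟨hyj, hn⟩)⟩

theorem Cond1.exists_rank_on (h : Cond1 x B) (S : Finset K) :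
    ∃ u : X₁ × X₂ → ℕ, ∀ k ∈ S, ∃ z ∈ sec1 (B k) (x k).1, ∀ w ∈ B k, w ≠ z → u z < u w := by
  classical
  induction S using Finset.strongInduction with
  | H S ih =>
    rcases S.eq_empty_or_nonempty with rfl | hS
    · exact ⟨0, by simp⟩
    obtain ⟨y, ⟨k₀, hk₀, hyk₀⟩, hy⟩ := h.exists_forall_mem_sec1 (S := ↑S) hS
    obtain ⟨u, hu⟩ := ih (S.filter fun k => y ∉ B k)
      (Finset.filter_ssubset.2 ⟨k₀, hk₀, not_not.2 hyk₀⟩)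
    refine ⟨fun w => if w = y then 0 else u w + 1, fun k hk => ?_⟩
    by_cases hyk : y ∈ B k
    · exact ⟨y, hy k hk hyk, fun w _ hw => by simp [hw]⟩
    · obtain ⟨z, hz, hzw⟩ := hu k (Finset.mem_filter.2 ⟨hk, hyk⟩)
      have hzy : z ≠ y := fun h => hyk (h ▸ hz.1)
      refine ⟨z, hz, fun w hw hwz => ?_⟩
      have hwy : w ≠ y := fun h => hyk (h ▸ hw)
      simp [hzy, hwy, hzw w hw hwz]

theorem Cond1.exists_rank [Fintype K] (h : Cond1 x B) :
    ∃ u : X₁ × X₂ → ℕ, ∀ k, ∃ z ∈ sec1 (B k) (x k).1, ∀ w ∈ B k, w ≠ z → u z < u w :=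
  (h.exists_rank_on Finset.univ).imp fun _ hu k => hu k (Finset.mem_univ k)

theorem nsarp_of_maxSet_sec1_eq_singleton {p : X₁ × X₂ → X₁ × X₂ → Prop} (hp : WeakOrder p)
    (h : ∀ k, maxSet (sec1 (B k) (x k).1) p = {x k}) : NSARP x B := by
  rintro ⟨L, k, hcyc⟩
  obtain ⟨l, -, hl⟩ := hp.exists_max_image (x ∘ k) (Finset.univ_nonempty (α := Fin (L + 1)))
  obtain ⟨hne, hmem⟩ := hcyc l
  exact hne (hp.eq_of_maxSet_eq_singleton (h _) hmem (hl (l + 1) (Finset.mem_univ _)))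

theorem cond1_of_maxSet_eq_singleton [Finite K] {p : X₁ × X₂ → X₁ × X₂ → Prop}
    (hp : WeakOrder p) (h : ∀ k, ∃ z, maxSet (B k) p = {z} ∧ z ∈ sec1 (B k) (x k).1) :
    Cond1 x B := by
  choose z hz hzsec using h
  intro S hS hsub
  obtain ⟨i, hi, himax⟩ := hp.exists_max_image z (s := S.toFinite.toFinset) (by simpa using hS)
  rw [Set.Finite.mem_toFinset] at hi
  obtain ⟨j, hj, hzi, hzi'⟩ := Set.mem_iUnion₂.1 (hsub (Set.mem_biUnion hi (hzsec i)))
  have hij := hp.eq_of_maxSet_eq_singleton (hz j) hzi (himax j (by simpa using hj))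
  exact hzi' (hij ▸ hzsec j)

end RevealedPreference

theorem naive_rationalizable_iff_NSARP_and_Cond1
    {K X₁ X₂ : Type} [Fintype K]
    (x : K → X₁ × X₂) (B : K → Set (X₁ × X₂)) (hmem : ∀ k, x k ∈ B k) :
    NaiveRat x B ↔ NSARP x B ∧ Cond1 x B := by
  constructor
  · rintro ⟨p₁, p₂, hp₁, hp₂, h⟩
    exact ⟨nsarp_of_maxSet_sec1_eq_singleton hp₂ fun k => (h k).2,
      cond1_of_maxSet_eq_singleton hp₁ fun k => (h k).1⟩
  · rintro ⟨hN, hC⟩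
    obtain ⟨u₁, hu₁⟩ := hC.exists_rank
    obtain ⟨u₂, hu₂⟩ := hN.exists_rank
    refine ⟨_, _, weakOrder_le_comp u₁, weakOrder_le_comp u₂, fun k => ⟨?_, ?_⟩⟩
    · obtain ⟨z, hz, hzw⟩ := hu₁ k
      exact ⟨z, maxSet_le_comp_eq_singleton u₁ hz.1 hzw, hz⟩
    · exact maxSet_le_comp_eq_singleton u₂ ⟨hmem k, rfl⟩ (hu₂ k)
end

section
/- A finite dataset D is strictly naively Nash rationalizable if and only if it satisfies both N-SARP and NN-SARP. -/
/-!
Each half of the data, with its own sections `B^k(x₁^k)` resp. `B^k(·, x₂^k)`, is handled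
separately. Let `a ≺ b` mean that `b` was chosen from a section containing `a ≠ b`. A weak order
with `x^k` the unique maximum of every section must strictly prefer `b` to `a` whenever `a ≺ b`,
so `≺` has no cycle. Conversely, if `≺` has no cycle its reflexive-transitive closure is a
partial order, and any linear extension of it (Szpilrajn) rationalizes the data.
-/

open Relation

section Cycles

variable {α : Type*} {R : α → α → Prop}

theorem exists_fin_path_of_transGen {a b : α} (h : TransGen R a b) :
    ∃ (L : ℕ) (f : Fin (L + 1) → α), f 0 = a ∧
      (∀ i : Fin L, R (f i.castSucc) (f i.succ)) ∧ R (f (Fin.last L)) b := by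
  induction h with
  | single hab => exact ⟨0, fun _ => a, rfl, fun i => i.elim0, hab⟩
  | @tail m _ _ hm ih =>
    obtain ⟨L, f, hf0, hf, hlast⟩ := ih
    refine ⟨L + 1, Fin.snoc f m, by rwa [← Fin.castSucc_zero, Fin.snoc_castSucc], fun i => ?_,
      by rwa [Fin.snoc_last]⟩
    cases i using Fin.lastCases with
    | last => rwa [Fin.snoc_castSucc, Fin.succ_last, Fin.snoc_last]
    | cast j => rw [Fin.succ_castSucc, Fin.snoc_castSucc, Fin.snoc_castSucc]; exact hf j

theorem exists_fin_cycle_iff_exists_transGen :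
    (∃ (L : ℕ) (f : Fin (L + 1) → α), ∀ l, R (f l) (f (l + 1))) ↔ ∃ u, TransGen R u u := by
  constructor
  · rintro ⟨L, f, hf⟩
    have hpath : ∀ i, ReflTransGen R (f 0) (f i) :=
      Fin.induction .refl fun i ih => ih.tail (by simpa [Fin.coeSucc_eq_succ] using hf i.castSucc)
    exact ⟨f 0, TransGen.tail' (hpath (Fin.last L)) (by simpa using hf (Fin.last L))⟩
  · rintro ⟨u, hu⟩
    obtain ⟨L, f, hf0, hf, hlast⟩ := exists_fin_path_of_transGen hu
    refine ⟨L, f, fun l => ?_⟩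
    cases l using Fin.lastCases with
    | last => rwa [Fin.last_add_one, hf0]
    | cast i => rw [Fin.coeSucc_eq_succ]; exact hf i

end Cycles

theorem maxSet_eq_singleton_iff {X : Type} {S : Set X} {p : X → X → Prop} {a : X}
    (hp : WeakOrder p) : maxSet S p = {a} ↔ a ∈ S ∧ ∀ y ∈ S, y ≠ a → ¬ p y a := by
  obtain ⟨htotal, htrans⟩ := hp
  constructor
  · intro h
    have ha : a ∈ maxSet S p := h ▸ rfl
    refine ⟨ha.1, fun y hy hya hpya => hya ?_⟩
    exact (h ▸ ⟨hy, fun z hz => htrans hpya (ha.2 z hz)⟩ : y ∈ ({a} : Set X))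
  · rintro ⟨ha, hmax⟩
    ext z
    constructor
    · rintro ⟨hz, hza⟩
      by_contra hne
      exact hmax z hz hne (hza a ha)
    · rintro rfl
      refine ⟨ha, fun y hy => ?_⟩
      by_cases hyz : y = z
      · exact hyz ▸ (htotal y y).elim id id
      · exact (htotal z y).resolve_right (hmax y hy hyz)

section Revealed

variable {K α : Type} (x : K → α) (sec : K → Set α)

def RevealedLT (a b : α) : Prop :=
  ∃ k, x k = b ∧ a ∈ sec k ∧ a ≠ b

/-- N-SARP and NN-SARP are `¬ HasRevealedCycle x sec` for `sec k` the relevant section of `B k`. -/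
def HasRevealedCycle : Prop :=
  ∃ (L : ℕ) (k : Fin (L + 1) → K), ∀ l, x (k l) ≠ x (k (l + 1)) ∧ x (k l) ∈ sec (k (l + 1))

theorem hasRevealedCycle_iff : HasRevealedCycle x sec ↔ ∃ u, TransGen (RevealedLT x sec) u u := by
  rw [← exists_fin_cycle_iff_exists_transGen]
  constructor
  · rintro ⟨L, k, hk⟩
    exact ⟨L, x ∘ k, fun l => ⟨k (l + 1), rfl, (hk l).2, (hk l).1⟩⟩
  · rintro ⟨L, f, hf⟩
    choose k hxk hmem hne using hf
    have hxk' : ∀ l, x (k (l - 1)) = f l := fun l => by rw [hxk, sub_add_cancel]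
    refine ⟨L, fun l => k (l - 1), fun l => ?_⟩
    dsimp only
    rw [hxk' l, hxk' (l + 1), add_sub_cancel_right]
    exact ⟨hne l, hmem l⟩

variable {x sec}

theorem not_hasRevealedCycle_of_maxSet_eq {p : α → α → Prop} (hp : WeakOrder p)
    (hmax : ∀ k, maxSet (sec k) p = {x k}) : ¬ HasRevealedCycle x sec := by
  rintro hcyc
  obtain ⟨u, hu⟩ := (hasRevealedCycle_iff x sec).1 hcyc
  obtain ⟨htotal, htrans⟩ := hp
  have : IsTrans α fun a b => ¬ p a b := ⟨fun a b c hab hbc hac =>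
    hbc (htrans ((htotal a b).resolve_left hab) hac)⟩
  have hlt : ∀ a b, RevealedLT x sec a b → ¬ p a b := by
    rintro a _ ⟨k, rfl, ha, hne⟩
    exact ((maxSet_eq_singleton_iff ⟨htotal, htrans⟩).1 (hmax k)).2 a ha hne
  exact transGen_minimal hlt u u hu ((htotal u u).elim id id)

theorem exists_weakOrder_maxSet_eq_of_not_hasRevealedCycle (hx : ∀ k, x k ∈ sec k)
    (hcyc : ¬ HasRevealedCycle x sec) :
    ∃ p : α → α → Prop, WeakOrder p ∧ ∀ k, maxSet (sec k) p = {x k} := by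
  set R := RevealedLT x sec
  have hacyc : ∀ u, ¬ TransGen R u u := fun u hu => hcyc ((hasRevealedCycle_iff x sec).2 ⟨u, hu⟩)
  have : IsPartialOrder α (ReflTransGen R) :=
    { refl := fun _ => .refl
      trans := fun _ _ _ => ReflTransGen.trans
      antisymm := fun a b hab hba => by
        rcases reflTransGen_iff_eq_or_transGen.1 hab with rfl | hab
        · rfl
        rcases reflTransGen_iff_eq_or_transGen.1 hba with rfl | hba
        · rfl
        exact (hacyc a (hab.trans hba)).elim }
  obtain ⟨s, hs, hRs⟩ := extend_partialOrder (ReflTransGen R)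
  have hp : WeakOrder fun a b => s b a :=
    ⟨fun a b => total_of s b a, fun _ _ _ hab hbc => trans_of s hbc hab⟩
  refine ⟨_, hp, fun k => (maxSet_eq_singleton_iff hp).2 ⟨hx k, fun y hy hne hsy => hne ?_⟩⟩
  exact antisymm_of s (hRs _ _ (.single ⟨k, rfl, hy, hne⟩)) hsy

end Revealed

theorem strict_naive_nash_rationalizable_iff_NSARP_and_NNSARP_general
    {K X₁ X₂ : Type}
    (x : K → X₁ × X₂) (B : K → Set (X₁ × X₂)) (hmem : ∀ k, x k ∈ B k) :
    StrictNaiveNashRat x B ↔ NSARP x B ∧ NNSARP x B := by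
  constructor
  · rintro ⟨p₁, p₂, hp₁, hp₂, hmax⟩
    exact ⟨not_hasRevealedCycle_of_maxSet_eq hp₂ fun k => (hmax k).2,
      not_hasRevealedCycle_of_maxSet_eq hp₁ fun k => (hmax k).1⟩
  · rintro ⟨hN, hNN⟩
    obtain ⟨p₂, hp₂, hmax₂⟩ :=
      exists_weakOrder_maxSet_eq_of_not_hasRevealedCycle (sec := fun k => sec1 (B k) (x k).1)
        (fun k => ⟨hmem k, rfl⟩) hN
    obtain ⟨p₁, hp₁, hmax₁⟩ :=
      exists_weakOrder_maxSet_eq_of_not_hasRevealedCycle (sec := fun k => sec2 (B k) (x k).2)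
        (fun k => ⟨hmem k, rfl⟩) hNN
    exact ⟨p₁, p₂, hp₁, hp₂, fun k => ⟨hmax₁ k, hmax₂ k⟩⟩

theorem strict_naive_nash_rationalizable_iff_NSARP_and_NNSARP
    {K X₁ X₂ : Type} [Fintype K]
    (x : K → X₁ × X₂) (B : K → Set (X₁ × X₂)) (hmem : ∀ k, x k ∈ B k) :
    StrictNaiveNashRat x B ↔ NSARP x B ∧ NNSARP x B :=
  strict_naive_nash_rationalizable_iff_NSARP_and_NNSARP_general x B hmem
end

section
/- If a finite dataset D is sophisticated rationalizable, then it satisfies Condition 2: there is no sequence k₁,…,k_L with x^{k_l} ≠ x^{k_{l+1}} and x^{k_l} ∈ B^{k_{l+1}}(x₁^{k_l}) ⊆ B^{k_l}(x₁^{k_l}) for each l (cyclically). -/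
/-!
Under sophisticated rationalizability each observation `x k` is a `≿₂`-best response within its own
section. The section inclusion of a cycle step `l → l + 1` keeps `x (k l)` a best response in
`B (k (l + 1))`, so it competes with `x (k (l + 1))` for `≿₁`; as the `≿₁`-maximum there is unique
and different from it, `x (k (l + 1)) ≻₁ x (k l)`. Around the cycle this contradicts transitivity.
-/

theorem Transitive.strictPart {α : Type*} {r : α → α → Prop} (hr : Transitive r) :
    Transitive fun a b => r a b ∧ ¬ r b a :=
  fun _ _ _ hab hbc => ⟨hr hab.1 hbc.1, fun hca => hbc.2 (hr hca hab.1)⟩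

open Fin.NatCast in
theorem Fin.not_forall_rel_add_one_self {α : Type*} {r : α → α → Prop} (htrans : Transitive r)
    (hirrefl : ∀ a, ¬ r a a) {L : ℕ} (f : Fin (L + 1) → α) : ¬ ∀ l, r (f (l + 1)) (f l) := by
  intro hf
  have hchain : ∀ n : ℕ, r (f ((n + 1 : ℕ) : Fin (L + 1))) (f 0) := by
    intro n
    induction n with
    | zero => simpa using hf 0
    | succ n ih => exact htrans (by rw [Nat.cast_succ (R := Fin (L + 1)) (n + 1)]; exact hf _) ih
  exact hirrefl _ (by simpa using hchain L)

theorem mem_maxSet_of_subset {X : Type} {S T : Set X} {p : X → X → Prop} {z : X}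
    (hTS : T ⊆ S) (hzT : z ∈ T) (hz : z ∈ maxSet S p) : z ∈ maxSet T p :=
  ⟨hzT, fun y hy => hz.2 y (hTS hy)⟩

theorem mem_maxSet_of_rel {X : Type} {S : Set X} {p : X → X → Prop} {y z : X}
    (hp : Transitive p) (hz : z ∈ maxSet S p) (hy : y ∈ S) (hyz : p y z) : y ∈ maxSet S p :=
  ⟨hy, fun w hw => hp hyz (hz.2 w hw)⟩

section BestResponses

variable {X₁ X₂ : Type}

def bestResponses (B : Set (X₁ × X₂)) (p2 : X₁ × X₂ → X₁ × X₂ → Prop) : Set (X₁ × X₂) :=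
  ⋃ a ∈ Prod.fst '' B, maxSet (sec1 B a) p2

theorem mem_bestResponses_iff {B : Set (X₁ × X₂)} {p2 : X₁ × X₂ → X₁ × X₂ → Prop}
    {z : X₁ × X₂} : z ∈ bestResponses B p2 ↔ z ∈ maxSet (sec1 B z.1) p2 := by
  simp only [bestResponses, Set.mem_iUnion]
  constructor
  · rintro ⟨a, -, hz⟩
    rwa [hz.1.2]
  · exact fun hz => ⟨z.1, ⟨z, hz.1.1, rfl⟩, hz⟩

theorem rel_and_not_rel_of_maxSet_bestResponses_eq_singleton
    {p1 p2 : X₁ × X₂ → X₁ × X₂ → Prop} (hp1 : Transitive p1) {B B' : Set (X₁ × X₂)}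
    {z z' : X₁ × X₂} (hz : maxSet (bestResponses B p2) p1 = {z})
    (hz' : maxSet (bestResponses B' p2) p1 = {z'}) (hne : z ≠ z') (hzB' : z ∈ sec1 B' z.1)
    (hsub : sec1 B' z.1 ⊆ sec1 B z.1) : p1 z' z ∧ ¬ p1 z z' := by
  have hzB : z ∈ maxSet (sec1 B z.1) p2 :=
    mem_bestResponses_iff.1 (hz.symm ▸ Set.mem_singleton z : z ∈ maxSet _ p1).1
  have hz_resp : z ∈ bestResponses B' p2 :=
    mem_bestResponses_iff.2 (mem_maxSet_of_subset hsub hzB' hzB)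
  have hz'_max : z' ∈ maxSet (bestResponses B' p2) p1 := hz'.symm ▸ Set.mem_singleton z'
  refine ⟨hz'_max.2 z hz_resp, fun hzz' => hne ?_⟩
  have hz_max : z ∈ maxSet (bestResponses B' p2) p1 := mem_maxSet_of_rel hp1 hz'_max hz_resp hzz'
  rwa [hz'] at hz_max

end BestResponses

theorem sophisticated_rationalizable_implies_Cond2_general
    {K X₁ X₂ : Type}
    (x : K → X₁ × X₂) (B : K → Set (X₁ × X₂))
    (h : SophRat x B) : Cond2 x B := by
  rintro ⟨L, k, hcyc⟩
  obtain ⟨p1, p2, ⟨-, hp1⟩, -, hmax⟩ := h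
  refine Fin.not_forall_rel_add_one_self hp1.strictPart (fun _ h => h.2 h.1) (x ∘ k) fun l => ?_
  obtain ⟨hne, hin, hsub⟩ := hcyc l
  exact rel_and_not_rel_of_maxSet_bestResponses_eq_singleton hp1 (hmax _) (hmax _) hne hin hsub

theorem sophisticated_rationalizable_implies_Cond2
    {K X₁ X₂ : Type} [Fintype K]
    (x : K → X₁ × X₂) (B : K → Set (X₁ × X₂)) (hmem : ∀ k, x k ∈ B k)
    (h : SophRat x B) : Cond2 x B :=
  sophisticated_rationalizable_implies_Cond2_general x B h
end

section
/- Let D be a finite multi-period dataset (T periods). If D is naively rationalizable, then for every nonempty S ⊆ K and every t ≤ T (Condition 5): ⋃_{k∈S} B^k(x^k_t) is not a subset of ⋃_{k∈S} (B^k(x^k_{t−1}) \ B^k(x^k_t)). -/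
/-- The section of a budget `B` fixing the first `n` coordinates at those of `x`. -/
def secUpTo {T : ℕ} {X : Fin T → Type} (B : Set (∀ t, X t)) (x : ∀ t, X t)
    (n : ℕ) : Set (∀ t, X t) :=
  {y ∈ B | ∀ s : Fin T, (s : ℕ) < n → y s = x s}

/-- T-period naive rationalizability: agent `t` uniquely maximizes `≿ₜ` on
`B^k(x^k_{t-1})`, the maximizer agreeing with the data in period `t`, and the
last agent's unique maximum is `x^k`. -/
def NaiveRatT {K : Type} {T : ℕ} {X : Fin T → Type} (hT : 0 < T)
    (x : K → ∀ t, X t) (B : K → Set (∀ t, X t)) : Prop :=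
  ∃ pref : Fin T → ((∀ t, X t) → (∀ t, X t) → Prop),
    (∀ t, WeakOrder (pref t)) ∧
    ∀ k, (∀ t : Fin T, (t : ℕ) + 1 < T →
        ∃ z, maxSet (secUpTo (B k) (x k) (t : ℕ)) (pref t) = {z} ∧
          z ∈ secUpTo (B k) (x k) ((t : ℕ) + 1)) ∧
      maxSet (secUpTo (B k) (x k) (T - 1)) (pref ⟨T - 1, by omega⟩) = {x k}

/-- Condition 5. -/
def Cond5 {K : Type} {T : ℕ} {X : Fin T → Type}
    (x : K → ∀ t, X t) (B : K → Set (∀ t, X t)) : Prop :=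
  ∀ S : Set K, S.Nonempty → ∀ t : ℕ, 1 ≤ t → t ≤ T →
    ¬ (⋃ k ∈ S, secUpTo (B k) (x k) t) ⊆
      ⋃ k ∈ S, (secUpTo (B k) (x k) (t - 1) \ secUpTo (B k) (x k) t)

lemma exists_pref_max {α β : Type} (r : β → β → Prop)
    (htot : ∀ a b, r a b ∨ r b a) (htr : Transitive r) (f : α → β) :
    ∀ s : Finset α, s.Nonempty → ∃ a ∈ s, ∀ b ∈ s, r (f a) (f b) := by
  classical
  intro s
  induction s using Finset.induction with
  | empty => simp
  | @insert c s' hc ih =>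
    intro _
    by_cases hne : s'.Nonempty
    · obtain ⟨a, ha, hmax⟩ := ih hne
      rcases htot (f a) (f c) with h1 | h1
      · refine ⟨a, Finset.mem_insert_of_mem ha, ?_⟩
        intro b hb
        rcases Finset.mem_insert.1 hb with rfl | hb
        · exact h1
        · exact hmax b hb
      · refine ⟨c, Finset.mem_insert_self _ _, ?_⟩
        intro b hb
        rcases Finset.mem_insert.1 hb with rfl | hb
        · rcases htot (f b) (f b) with h | h <;> exact h
        · exact htr h1 (hmax b hb)
    · refine ⟨c, Finset.mem_insert_self _ _, ?_⟩
      intro b hb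
      rcases Finset.mem_insert.1 hb with rfl | hb
      · rcases htot (f b) (f b) with h | h <;> exact h
      · exact absurd ⟨b, hb⟩ hne

theorem naive_rationalizable_implies_Cond5
    {K : Type} [Fintype K] {T : ℕ} (hT : 0 < T) {X : Fin T → Type}
    (x : K → ∀ t, X t) (B : K → Set (∀ t, X t)) (hmem : ∀ k, x k ∈ B k)
    (h : NaiveRatT hT x B) : Cond5 x B := by
  classical
  obtain ⟨pref, hwo, hk⟩ := h
  intro S hS t ht1 htT hsub
  have htlt : t - 1 < T := by omega
  have key : ∀ k, ∃ z,
      maxSet (secUpTo (B k) (x k) (t - 1)) (pref ⟨t - 1, htlt⟩) = {z} ∧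
      z ∈ secUpTo (B k) (x k) t := by
    intro k
    rcases eq_or_lt_of_le htT with rfl | hlt
    · refine ⟨x k, (hk k).2, ⟨hmem k, fun s _ => rfl⟩⟩
    · obtain ⟨z, hz1, hz2⟩ := (hk k).1 ⟨t - 1, htlt⟩ (by simp; omega)
      refine ⟨z, hz1, ?_⟩
      have : t - 1 + 1 = t := by omega
      simpa [this] using hz2
  choose z hz1 hz2 using key
  obtain ⟨k0, hk0⟩ := hS
  obtain ⟨kstar, hkstar, hmax⟩ :=
    exists_pref_max (pref ⟨t - 1, htlt⟩) (hwo _).1 (hwo _).2 z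
      (S.toFinite.toFinset) ⟨k0, S.toFinite.mem_toFinset.2 hk0⟩
  have hkstarS : kstar ∈ S := S.toFinite.mem_toFinset.1 hkstar
  have hz : z kstar ∈ ⋃ k ∈ S, secUpTo (B k) (x k) t :=
    Set.mem_biUnion hkstarS (hz2 kstar)
  have hz' := hsub hz
  simp only [Set.mem_iUnion, Set.mem_diff] at hz'
  obtain ⟨j, hjS, hjmem, hjnot⟩ := hz'
  have hzjmax : z j ∈ maxSet (secUpTo (B j) (x j) (t - 1)) (pref ⟨t - 1, htlt⟩) := by
    rw [hz1 j]; rfl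
  have hmem' : z kstar ∈ maxSet (secUpTo (B j) (x j) (t - 1)) (pref ⟨t - 1, htlt⟩) := by
    refine ⟨hjmem, fun y hy => ?_⟩
    exact (hwo _).2 (hmax j (S.toFinite.mem_toFinset.2 hjS)) (hzjmax.2 y hy)
  rw [hz1 j] at hmem'
  exact hjnot (hmem' ▸ hz2 j)
end

section
/- Suppose weak orders ≿₁, ≿₂ rationalize a dataset in the sophisticated sense, and define R₂ by x^k R₂ x^s iff x^k ≠ x^s and x^s ∈ B^k(x₁^k). Then x^k R₂ x^s implies either x^k ≻₂ x^s, or (x^k ∼₂ x^s and x^k ≻₁ x^s); consequently R₂ is acyclic (N-SARP holds). -/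
def LexStrict {α : Type*} (primary secondary : α → α → Prop) (a b : α) : Prop :=
  (primary a b ∧ ¬ primary b a) ∨
    ((primary a b ∧ primary b a) ∧ (secondary a b ∧ ¬ secondary b a))

namespace LexStrict

variable {α : Type*} {primary secondary : α → α → Prop}

instance : Std.Irrefl (LexStrict primary secondary) :=
  ⟨fun _ h => h.elim (fun h => h.2 h.1) (fun h => h.2.2 h.2.1)⟩

instance [IsTrans α primary] [IsTrans α secondary] :
    IsTrans α (LexStrict primary secondary) := by
  refine ⟨fun a b c => ?_⟩
  rintro (⟨hab, hba⟩ | ⟨⟨hab, hba⟩, sab, sba⟩) (⟨hbc, hcb⟩ | ⟨⟨hbc, hcb⟩, sbc, scb⟩)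
  · exact Or.inl ⟨_root_.trans hab hbc, fun hca => hcb (_root_.trans hca hab)⟩
  · exact Or.inl ⟨_root_.trans hab hbc, fun hca => hba (_root_.trans hbc hca)⟩
  · exact Or.inl ⟨_root_.trans hab hbc, fun hca => hcb (_root_.trans hca hab)⟩
  · exact Or.inr ⟨⟨_root_.trans hab hbc, _root_.trans hcb hba⟩, _root_.trans sab sbc,
      fun sca => scb (_root_.trans sca sab)⟩

end LexStrict

open Fin.NatCast in
theorem not_forall_rel_cycle {α : Type*} {r : α → α → Prop} [IsTrans α r] [Std.Irrefl r]
    (L : ℕ) (f : Fin (L + 1) → α) : ¬ ∀ l : Fin (L + 1), r (f l) (f (l + 1)) := by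
  intro hf
  let g : ℕ → α := fun n => f n
  have hstep : ∀ n, r (g n) (g (n + 1)) := fun n => by
    simpa only [g, Nat.cast_succ] using hf n
  have hloop := Nat.rel_of_forall_rel_succ_of_lt r hstep (Nat.zero_lt_succ L)
  simp only [g, Nat.cast_zero, Fin.natCast_self] at hloop
  exact irrefl _ hloop

theorem mem_maxSet_of_pref {X : Type} {S : Set X} {pref : X → X → Prop} [IsTrans X pref]
    {y z : X} (hz : z ∈ maxSet S pref) (hy : y ∈ S) (hyz : pref y z) : y ∈ maxSet S pref :=
  ⟨hy, fun w hw => _root_.trans hyz (hz.2 w hw)⟩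

section Sophisticated

variable {X₁ X₂ : Type}

theorem mem_iUnion_maxSet_sec1_iff {B : Set (X₁ × X₂)} {p : X₁ × X₂ → X₁ × X₂ → Prop}
    {z : X₁ × X₂} :
    z ∈ (⋃ a ∈ Prod.fst '' B, maxSet (sec1 B a) p) ↔ z ∈ maxSet (sec1 B z.1) p := by
  simp only [Set.mem_iUnion₂]
  constructor
  · rintro ⟨a, -, hz⟩
    rwa [hz.1.2]
  · intro hz
    exact ⟨z.1, Set.mem_image_of_mem _ hz.1.1, hz⟩

theorem lexStrict_of_mem_sec1 {B : Set (X₁ × X₂)} {p1 p2 : X₁ × X₂ → X₁ × X₂ → Prop}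
    [IsTrans _ p1] [IsTrans _ p2] {z y : X₁ × X₂}
    (hrat : maxSet (⋃ a ∈ Prod.fst '' B, maxSet (sec1 B a) p2) p1 = {z})
    (hy : y ∈ sec1 B z.1) (hyz : y ≠ z) : LexStrict p2 p1 z y := by
  have hz : z ∈ maxSet (⋃ a ∈ Prod.fst '' B, maxSet (sec1 B a) p2) p1 := hrat ▸ rfl
  have hz₂ : z ∈ maxSet (sec1 B z.1) p2 := mem_iUnion_maxSet_sec1_iff.1 hz.1
  by_cases hyz₂ : p2 y z
  · have hy₂ : y ∈ maxSet (sec1 B y.1) p2 := by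
      rw [hy.2]
      exact mem_maxSet_of_pref hz₂ hy hyz₂
    have hyU := mem_iUnion_maxSet_sec1_iff.2 hy₂
    refine Or.inr ⟨⟨hz₂.2 y hy, hyz₂⟩, hz.2 y hyU, fun hyz₁ => hyz ?_⟩
    simpa only [hrat, Set.mem_singleton_iff] using mem_maxSet_of_pref hz hyU hyz₁
  · exact Or.inl ⟨hz₂.2 y hy, hyz₂⟩

end Sophisticated

theorem R2_implies_pref_and_acyclic_general
    {K X₁ X₂ : Type}
    (x : K → X₁ × X₂) (B : K → Set (X₁ × X₂))
    (p1 p2 : X₁ × X₂ → X₁ × X₂ → Prop)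
    (hw1 : WeakOrder p1) (hw2 : WeakOrder p2)
    (hrat : ∀ k, maxSet (⋃ a ∈ Prod.fst '' B k, maxSet (sec1 (B k) a) p2) p1 = {x k}) :
    let R2 : K → K → Prop := fun k s => x k ≠ x s ∧ x s ∈ sec1 (B k) (x k).1
    (∀ k s, R2 k s →
        ((p2 (x k) (x s) ∧ ¬ p2 (x s) (x k)) ∨
          ((p2 (x k) (x s) ∧ p2 (x s) (x k)) ∧ (p1 (x k) (x s) ∧ ¬ p1 (x s) (x k))))) ∧
      ¬ ∃ (L : ℕ) (c : Fin (L + 1) → K), ∀ l : Fin (L + 1), R2 (c l) (c (l + 1)) := by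
  intro R2
  have : IsTrans _ p1 := ⟨fun _ _ _ hab hbc => hw1.2 hab hbc⟩
  have : IsTrans _ p2 := ⟨fun _ _ _ hab hbc => hw2.2 hab hbc⟩
  have hlex : ∀ k s, R2 k s → LexStrict p2 p1 (x k) (x s) := fun k s hks =>
    lexStrict_of_mem_sec1 (hrat k) hks.2 (Ne.symm hks.1)
  refine ⟨hlex, ?_⟩
  rintro ⟨L, c, hc⟩
  exact not_forall_rel_cycle L (x ∘ c) fun l => hlex _ _ (hc l)

theorem R2_implies_pref_and_acyclic
    {K X₁ X₂ : Type} [Fintype K]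
    (x : K → X₁ × X₂) (B : K → Set (X₁ × X₂)) (hmem : ∀ k, x k ∈ B k)
    (p1 p2 : X₁ × X₂ → X₁ × X₂ → Prop)
    (hw1 : WeakOrder p1) (hw2 : WeakOrder p2)
    (hrat : ∀ k, maxSet (⋃ a ∈ Prod.fst '' B k, maxSet (sec1 (B k) a) p2) p1 = {x k}) :
    let R2 : K → K → Prop := fun k s => x k ≠ x s ∧ x s ∈ sec1 (B k) (x k).1
    (∀ k s, R2 k s →
        ((p2 (x k) (x s) ∧ ¬ p2 (x s) (x k)) ∨
          ((p2 (x k) (x s) ∧ p2 (x s) (x k)) ∧ (p1 (x k) (x s) ∧ ¬ p1 (x s) (x k))))) ∧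
      ¬ ∃ (L : ℕ) (c : Fin (L + 1) → K), ∀ l : Fin (L + 1), R2 (c l) (c (l + 1)) :=
  R2_implies_pref_and_acyclic_general x B p1 p2 hw1 hw2 hrat
end
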